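/- The RDS step-function integral is additive over subintervals: for any step function f on [a,b], any α of bounded variation, and any m ∈ (a,b), the RDS integral of f over [a,m] plus the RDS integral of f over [m,b] equals the RDS integral of f over [a,b]. -/

import Mathlib

open Set Filter Topology
open scoped Classical

noncomputable section

/-- A partition `a = x 0 < x 1 < ... < x n = b` of `[a,b]`. -/
structure RDSPartition (a b : ℝ) where
  n : ℕ
  x : ℕ → ℝ
  mono : ∀ i, i < n → x i < x (i + 1)
  first : x 0 = a
  last : x n = b

/-- Right limit `α(t+)`, with the convention `α(b+) = α(b)` at the right endpoint. -/
def rLim (b : ℝ) (α : ℝ → ℝ) (t : ℝ) : ℝ :=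
  if t < b then Function.rightLim α t else α t

/-- Left limit `α(t-)`, with the convention `α(a-) = α(a)` at the left endpoint. -/
def lLim (a : ℝ) (α : ℝ → ℝ) (t : ℝ) : ℝ :=
  if a < t then Function.leftLim α t else α t

/-- `α`-length of the singleton `{t}` inside `[a,b]`: `α(t+) - α(t-)`. -/
def muPt (a b : ℝ) (α : ℝ → ℝ) (t : ℝ) : ℝ :=
  rLim b α t - lLim a α t

/-- `α`-length of the open interval `(c,d)` inside `[a,b]`: `α(d-) - α(c+)`. -/
def muIoo (a b : ℝ) (α : ℝ → ℝ) (c d : ℝ) : ℝ :=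
  lLim a α d - rLim b α c

/-- `f` is a step function with respect to the partition `P`: it is constant on each
open subinterval `(x (i-1), x i)` of `P`. -/
def IsStepOn (a b : ℝ) (f : ℝ → ℝ) (P : RDSPartition a b) : Prop :=
  ∀ i, i < P.n → ∀ s ∈ Set.Ioo (P.x i) (P.x (i + 1)),
    f s = f ((P.x i + P.x (i + 1)) / 2)

/-- The RDS integral of a step function with respect to the partition `P`:
`Σ_{i=0}^n f(x_i) μ_α({x_i}) + Σ_{i=1}^n c_i μ_α(I_i)`. -/
def stepInt (a b : ℝ) (α : ℝ → ℝ) (P : RDSPartition a b) (f : ℝ → ℝ) : ℝ :=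
  (∑ i ∈ Finset.range (P.n + 1), f (P.x i) * muPt a b α (P.x i)) +
    ∑ i ∈ Finset.range P.n,
      f ((P.x i + P.x (i + 1)) / 2) * muIoo a b α (P.x i) (P.x (i + 1))

/-- Upper envelope: infimum of RDS step integrals of step functions above `f` on `[a,b]`. -/
def upperRDS (a b : ℝ) (α f : ℝ → ℝ) : ℝ :=
  sInf { r | ∃ (u : ℝ → ℝ) (P : RDSPartition a b), IsStepOn a b u P ∧
    (∀ t ∈ Set.Icc a b, f t ≤ u t) ∧ r = stepInt a b α P u }

/-- Lower envelope: supremum of RDS step integrals of step functions below `f` on `[a,b]`. -/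
def lowerRDS (a b : ℝ) (α f : ℝ → ℝ) : ℝ :=
  sSup { r | ∃ (v : ℝ → ℝ) (P : RDSPartition a b), IsStepOn a b v P ∧
    (∀ t ∈ Set.Icc a b, v t ≤ f t) ∧ r = stepInt a b α P v }

/-- RDS integrability with respect to an increasing integrator. -/
def RDSIntegrableInc (a b : ℝ) (α f : ℝ → ℝ) : Prop :=
  lowerRDS a b α f = upperRDS a b α f

/-- The RDS integral with respect to an increasing integrator. -/
def RDSIntegralInc (a b : ℝ) (α f : ℝ → ℝ) : ℝ := upperRDS a b α f

/-- RDS integrability with respect to a BV integrator: some Jordan decomposition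
into increasing functions works. -/
def RDSIntegrable (a b : ℝ) (α f : ℝ → ℝ) : Prop :=
  ∃ αp αm : ℝ → ℝ, MonotoneOn αp (Set.Icc a b) ∧ MonotoneOn αm (Set.Icc a b) ∧
    (∀ t ∈ Set.Icc a b, α t = αp t - αm t) ∧
    RDSIntegrableInc a b αp f ∧ RDSIntegrableInc a b αm f

/-- The RDS integral with respect to a BV integrator. -/
def RDSIntegral (a b : ℝ) (α f : ℝ → ℝ) : ℝ :=
  if h : RDSIntegrable a b α f then
    RDSIntegralInc a b h.choose f - RDSIntegralInc a b h.choose_spec.choose f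
  else 0

/-- `f` is bounded on `[a,b]`. -/
def BddOn (a b : ℝ) (f : ℝ → ℝ) : Prop :=
  ∃ M : ℝ, ∀ t ∈ Set.Icc a b, |f t| ≤ M

end


/-!
Write `f(x±)`, `α(x±)` for one-sided limits. A summation by parts turns the step integral into
`f(b) α(b) - f(a) α(a) + Σ_{a ≤ x < b} (f(x) - f(x+)) α(x+) + Σ_{a < x ≤ b} (f(x-) - f(x)) α(x-)`,
where only the partition points contribute to the sums. This expression no longer refers to the
partition, and it is visibly additive over `[a,m] ∪ [m,b]`, since `Ico a m ∪ Ico m b = Ico a b`,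
`Ioc a m ∪ Ioc m b = Ioc a b` and the boundary terms `f(m) α(m)` cancel.
-/

open Function

section OneSidedLimits

variable {γ β : Type*} [LinearOrder γ] [TopologicalSpace γ] [OrderTopology γ] [DenselyOrdered γ]
  [TopologicalSpace β] [T2Space β] {f : γ → β} {c : β}

theorem rightLim_eq_of_eqOn_Ioo [NoMaxOrder γ] {x d : γ} (hxd : x < d)
    (h : EqOn f (fun _ => c) (Ioo x d)) : rightLim f x = c :=
  rightLim_eq_of_tendsto <| tendsto_const_nhds.congr' <|
    eventuallyEq_of_mem (Ioo_mem_nhdsGT hxd) fun _ hy => (h hy).symm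

theorem leftLim_eq_of_eqOn_Ioo [NoMinOrder γ] {d x : γ} (hdx : d < x)
    (h : EqOn f (fun _ => c) (Ioo d x)) : leftLim f x = c :=
  leftLim_eq_of_tendsto <| tendsto_const_nhds.congr' <|
    eventuallyEq_of_mem (Ioo_mem_nhdsLT hdx) fun _ hy => (h hy).symm

end OneSidedLimits

theorem rLim_of_lt {b t : ℝ} (α : ℝ → ℝ) (h : t < b) : rLim b α t = rightLim α t := if_pos h

theorem rLim_self (b : ℝ) (α : ℝ → ℝ) : rLim b α b = α b := if_neg (lt_irrefl b)

theorem lLim_of_lt {a t : ℝ} (α : ℝ → ℝ) (h : a < t) : lLim a α t = leftLim α t := if_pos h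

theorem lLim_self (a : ℝ) (α : ℝ → ℝ) : lLim a α a = α a := if_neg (lt_irrefl a)

theorem exists_lt_mem_Ico_add_one {γ : Type*} [LinearOrder γ] (u : ℕ → γ) {t : γ} {n : ℕ}
    (h₀ : u 0 ≤ t) (hn : t < u n) : ∃ i < n, t ∈ Ico (u i) (u (i + 1)) := by
  induction n with
  | zero => exact absurd hn h₀.not_gt
  | succ n ih =>
    by_cases htn : t < u n
    · obtain ⟨i, hi, hti⟩ := ih htn
      exact ⟨i, by omega, hti⟩
    · exact ⟨n, by omega, not_lt.1 htn, hn⟩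

theorem exists_lt_mem_Ioc_add_one {γ : Type*} [LinearOrder γ] (u : ℕ → γ) {t : γ} {n : ℕ}
    (h₀ : u 0 < t) (hn : t ≤ u n) : ∃ i < n, t ∈ Ioc (u i) (u (i + 1)) := by
  induction n with
  | zero => exact absurd hn h₀.not_ge
  | succ n ih =>
    by_cases htn : t ≤ u n
    · obtain ⟨i, hi, hti⟩ := ih htn
      exact ⟨i, by omega, hti⟩
    · exact ⟨n, by omega, not_le.1 htn, hn⟩

noncomputable def jumpRight (f α : ℝ → ℝ) (x : ℝ) : ℝ := (f x - rightLim f x) * rightLim α x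

noncomputable def jumpLeft (f α : ℝ → ℝ) (x : ℝ) : ℝ := (leftLim f x - f x) * leftLim α x

noncomputable def stepIntByParts (a b : ℝ) (α f : ℝ → ℝ) : ℝ :=
  f b * α b - f a * α a + (∑ᶠ x ∈ Ico a b, jumpRight f α x) + ∑ᶠ x ∈ Ioc a b, jumpLeft f α x

theorem stepIntByParts_add {a m b : ℝ} (ham : a ≤ m) (hmb : m ≤ b) {α f : ℝ → ℝ}
    (hR₁ : (Ico a m ∩ support (jumpRight f α)).Finite)
    (hR₂ : (Ico m b ∩ support (jumpRight f α)).Finite)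
    (hL₁ : (Ioc a m ∩ support (jumpLeft f α)).Finite)
    (hL₂ : (Ioc m b ∩ support (jumpLeft f α)).Finite) :
    stepIntByParts a m α f + stepIntByParts m b α f = stepIntByParts a b α f := by
  rw [stepIntByParts, stepIntByParts, stepIntByParts, ← Ico_union_Ico_eq_Ico ham hmb,
    ← Ioc_union_Ioc_eq_Ioc ham hmb, finsum_mem_union' Ico_disjoint_Ico_same hR₁ hR₂,
    finsum_mem_union' (Ioc_disjoint_Ioc_of_le le_rfl) hL₁ hL₂]
  ring

namespace RDSPartition

variable {a b : ℝ} (P : RDSPartition a b)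

theorem strictMonoOn_x : StrictMonoOn P.x (Iic P.n) :=
  strictMonoOn_Iic_of_lt_succ fun i hi => by simpa using P.mono i hi

theorem x_mem_Ico {i : ℕ} (hi : i < P.n) : P.x i ∈ Ico a b :=
  ⟨P.first.symm.trans_le <| P.strictMonoOn_x.monotoneOn (by simp) (by simp; omega) i.zero_le,
    (P.strictMonoOn_x (by simp; omega) (by simp) hi).trans_eq P.last⟩

theorem x_add_one_mem_Ioc {i : ℕ} (hi : i < P.n) : P.x (i + 1) ∈ Ioc a b :=
  ⟨P.first.symm.trans_lt <| P.strictMonoOn_x (by simp) (by simp; omega) i.succ_pos,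
    (P.strictMonoOn_x.monotoneOn (by simp; omega) (by simp) hi).trans_eq P.last⟩

theorem injOn_x : InjOn P.x (Iio P.n) :=
  P.strictMonoOn_x.injOn.mono Iio_subset_Iic_self

theorem injOn_x_add_one : InjOn (fun i => P.x (i + 1)) (Iio P.n) := fun i hi j hj hij =>
  Nat.succ_injective (P.strictMonoOn_x.injOn (by simp at hi ⊢; omega) (by simp at hj ⊢; omega) hij)

end RDSPartition

namespace IsStepOn

variable {a b : ℝ} {f : ℝ → ℝ} {P : RDSPartition a b} (hf : IsStepOn a b f P)
include hf

theorem rightLim_x {i : ℕ} (hi : i < P.n) :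
    rightLim f (P.x i) = f ((P.x i + P.x (i + 1)) / 2) :=
  rightLim_eq_of_eqOn_Ioo (P.mono i hi) (hf i hi)

theorem leftLim_x_add_one {i : ℕ} (hi : i < P.n) :
    leftLim f (P.x (i + 1)) = f ((P.x i + P.x (i + 1)) / 2) :=
  leftLim_eq_of_eqOn_Ioo (P.mono i hi) (hf i hi)

theorem jumpRight_eq_zero (α : ℝ → ℝ) {i : ℕ} (hi : i < P.n) {t : ℝ}
    (ht : t ∈ Ioo (P.x i) (P.x (i + 1))) : jumpRight f α t = 0 := by
  have hlim : rightLim f t = f t := by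
    rw [hf i hi t ht]
    exact rightLim_eq_of_eqOn_Ioo ht.2 fun s hs => hf i hi s ⟨ht.1.trans hs.1, hs.2⟩
  rw [jumpRight, hlim, sub_self, zero_mul]

theorem jumpLeft_eq_zero (α : ℝ → ℝ) {i : ℕ} (hi : i < P.n) {t : ℝ}
    (ht : t ∈ Ioo (P.x i) (P.x (i + 1))) : jumpLeft f α t = 0 := by
  have hlim : leftLim f t = f t := by
    rw [hf i hi t ht]
    exact leftLim_eq_of_eqOn_Ioo ht.1 fun s hs => hf i hi s ⟨hs.1, hs.2.trans ht.2⟩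
  rw [jumpLeft, hlim, sub_self, zero_mul]

theorem mem_Ico_iff_of_jumpRight_ne_zero {α : ℝ → ℝ} {t : ℝ} (ht : jumpRight f α t ≠ 0) :
    t ∈ Ico a b ↔ t ∈ P.x '' Iio P.n := by
  constructor
  · intro htab
    obtain ⟨i, hi, hti⟩ := exists_lt_mem_Ico_add_one P.x (P.first ▸ htab.1) (P.last ▸ htab.2)
    rcases hti.1.eq_or_lt with rfl | hlt
    · exact ⟨i, hi, rfl⟩
    · exact absurd (hf.jumpRight_eq_zero α hi ⟨hlt, hti.2⟩) ht
  · rintro ⟨i, hi, rfl⟩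
    exact P.x_mem_Ico hi

theorem mem_Ioc_iff_of_jumpLeft_ne_zero {α : ℝ → ℝ} {t : ℝ} (ht : jumpLeft f α t ≠ 0) :
    t ∈ Ioc a b ↔ t ∈ (fun i => P.x (i + 1)) '' Iio P.n := by
  constructor
  · intro htab
    obtain ⟨i, hi, hti⟩ := exists_lt_mem_Ioc_add_one P.x (P.first ▸ htab.1) (P.last ▸ htab.2)
    rcases hti.2.eq_or_lt with rfl | hlt
    · exact ⟨i, hi, rfl⟩
    · exact absurd (hf.jumpLeft_eq_zero α hi ⟨hti.1, hlt⟩) ht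
  · rintro ⟨i, hi, rfl⟩
    exact P.x_add_one_mem_Ioc hi

theorem finite_Ico_inter_support_jumpRight (α : ℝ → ℝ) :
    (Ico a b ∩ support (jumpRight f α)).Finite :=
  ((finite_Iio P.n).image P.x).subset fun _ ⟨htab, ht⟩ =>
    (hf.mem_Ico_iff_of_jumpRight_ne_zero ht).1 htab

theorem finite_Ioc_inter_support_jumpLeft (α : ℝ → ℝ) :
    (Ioc a b ∩ support (jumpLeft f α)).Finite :=
  ((finite_Iio P.n).image _).subset fun _ ⟨htab, ht⟩ =>
    (hf.mem_Ioc_iff_of_jumpLeft_ne_zero ht).1 htab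

theorem finsum_jumpRight (α : ℝ → ℝ) :
    ∑ᶠ t ∈ Ico a b, jumpRight f α t = ∑ i ∈ Finset.range P.n, jumpRight f α (P.x i) := by
  rw [finsum_mem_inter_support_eq' _ _ _ fun t ht => hf.mem_Ico_iff_of_jumpRight_ne_zero ht,
    finsum_mem_image P.injOn_x, ← Finset.coe_range, finsum_mem_coe_finset]

theorem finsum_jumpLeft (α : ℝ → ℝ) :
    ∑ᶠ t ∈ Ioc a b, jumpLeft f α t = ∑ i ∈ Finset.range P.n, jumpLeft f α (P.x (i + 1)) := by
  rw [finsum_mem_inter_support_eq' _ _ _ fun t ht => hf.mem_Ioc_iff_of_jumpLeft_ne_zero ht,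
    finsum_mem_image P.injOn_x_add_one, ← Finset.coe_range, finsum_mem_coe_finset]

theorem stepInt_eq_stepIntByParts (α : ℝ → ℝ) : stepInt a b α P f = stepIntByParts a b α f := by
  set c : ℕ → ℝ := fun i => f ((P.x i + P.x (i + 1)) / 2)
  have hright : ∑ i ∈ Finset.range (P.n + 1), f (P.x i) * rLim b α (P.x i) =
      ∑ i ∈ Finset.range P.n, f (P.x i) * rightLim α (P.x i) + f b * α b := by
    rw [Finset.sum_range_succ, P.last, rLim_self]
    congr 1
    refine Finset.sum_congr rfl fun i hi => ?_
    rw [rLim_of_lt α (P.x_mem_Ico (Finset.mem_range.1 hi)).2]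
  have hleft : ∑ i ∈ Finset.range (P.n + 1), f (P.x i) * lLim a α (P.x i) =
      ∑ i ∈ Finset.range P.n, f (P.x (i + 1)) * leftLim α (P.x (i + 1)) + f a * α a := by
    rw [Finset.sum_range_succ', P.first, lLim_self]
    congr 1
    refine Finset.sum_congr rfl fun i hi => ?_
    rw [lLim_of_lt α (P.x_add_one_mem_Ioc (Finset.mem_range.1 hi)).1]
  have hcells : ∑ i ∈ Finset.range P.n, c i * muIoo a b α (P.x i) (P.x (i + 1)) =
      ∑ i ∈ Finset.range P.n, c i * (leftLim α (P.x (i + 1)) - rightLim α (P.x i)) := by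
    refine Finset.sum_congr rfl fun i hi => ?_
    rw [muIoo, lLim_of_lt α (P.x_add_one_mem_Ioc (Finset.mem_range.1 hi)).1,
      rLim_of_lt α (P.x_mem_Ico (Finset.mem_range.1 hi)).2]
  have hjumps : ∑ i ∈ Finset.range P.n, (jumpRight f α (P.x i) + jumpLeft f α (P.x (i + 1))) =
      ∑ i ∈ Finset.range P.n, ((f (P.x i) - c i) * rightLim α (P.x i) +
        (c i - f (P.x (i + 1))) * leftLim α (P.x (i + 1))) := by
    refine Finset.sum_congr rfl fun i hi => ?_
    rw [jumpRight, jumpLeft, hf.rightLim_x (Finset.mem_range.1 hi),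
      hf.leftLim_x_add_one (Finset.mem_range.1 hi)]
  rw [stepInt, stepIntByParts, hf.finsum_jumpRight, hf.finsum_jumpLeft, add_assoc,
    ← Finset.sum_add_distrib, hjumps, hcells]
  simp only [muPt, mul_sub, Finset.sum_sub_distrib, hright, hleft, sub_mul,
    Finset.sum_add_distrib]
  ring

end IsStepOn

theorem stmt3_general (a b m : ℝ) (hm : m ∈ Set.Ioo a b) (α f : ℝ → ℝ)
    (P : RDSPartition a b) (P₁ : RDSPartition a m) (P₂ : RDSPartition m b)
    (hP : IsStepOn a b f P) (hP₁ : IsStepOn a m f P₁) (hP₂ : IsStepOn m b f P₂) :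
    stepInt a m α P₁ f + stepInt m b α P₂ f = stepInt a b α P f := by
  rw [hP₁.stepInt_eq_stepIntByParts, hP₂.stepInt_eq_stepIntByParts,
    hP.stepInt_eq_stepIntByParts]
  exact stepIntByParts_add hm.1.le hm.2.le (hP₁.finite_Ico_inter_support_jumpRight α)
    (hP₂.finite_Ico_inter_support_jumpRight α) (hP₁.finite_Ioc_inter_support_jumpLeft α)
    (hP₂.finite_Ioc_inter_support_jumpLeft α)

theorem stmt3 (a b m : ℝ) (hm : m ∈ Set.Ioo a b) (α f : ℝ → ℝ)
    (hα : BoundedVariationOn α (Set.Icc a b))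
    (P : RDSPartition a b) (P₁ : RDSPartition a m) (P₂ : RDSPartition m b)
    (hP : IsStepOn a b f P) (hP₁ : IsStepOn a m f P₁) (hP₂ : IsStepOn m b f P₂) :
    stepInt a m α P₁ f + stepInt m b α P₂ f = stepInt a b α P f :=
  stmt3_general a b m hm α f P P₁ P₂ hP hP₁ hP₂
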